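/- The mixed weak type estimate with v = Mw fails in general: there exists a weight w on ℝ such that the inequality ‖M(f)/Mw‖_{L^{1,∞}(Mw)} ≤ c·‖f‖_{L^1(ℝ)}, i.e. sup_{t>0} t·(Mw)({x : M f(x) > t·Mw(x)}) ≤ c ∫|f|dx, does not hold for any finite constant c uniformly over all f ∈ L^1(ℝ). -/

import Mathlib

open MeasureTheory ENNReal Set Filter

noncomputable section

/-- Nondegenerate (closed) intervals of `ℝ`. -/
def IsIntv (Q : Set ℝ) : Prop := ∃ a b : ℝ, a < b ∧ Q = Set.Icc a b

/-- A weight: a nonnegative locally integrable (measurable) function on `ℝ`. -/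
def IsWeight (w : ℝ → ℝ) : Prop :=
  Measurable w ∧ (∀ x, 0 ≤ w x) ∧ LocallyIntegrable w volume

/-- `w(E) = ∫_E w dx`. -/
def wMeas (w : ℝ → ℝ) (E : Set ℝ) : ℝ≥0∞ :=
  ∫⁻ x in E, ENNReal.ofReal (w x)

/-- The average `|Q|⁻¹ ∫_Q w`. -/
def avgE (w : ℝ → ℝ) (Q : Set ℝ) : ℝ≥0∞ :=
  (volume Q)⁻¹ * ∫⁻ x in Q, ENNReal.ofReal (w x)

/-- The `A_1` quantity of `w` over an interval `Q`. -/
def A1Q (w : ℝ → ℝ) (Q : Set ℝ) : ℝ≥0∞ :=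
  avgE w Q * (essInf (fun x => ENNReal.ofReal (w x)) (volume.restrict Q))⁻¹

/-- The `A_1` constant `[w]_{A_1}` (supremum over all intervals). -/
def A1Const (w : ℝ → ℝ) : ℝ≥0∞ :=
  ⨆ (Q : Set ℝ) (_ : IsIntv Q), A1Q w Q

/-- The Hardy–Littlewood maximal operator over intervals containing `x`. -/
def maxOp (f : ℝ → ℝ) (x : ℝ) : ℝ≥0∞ :=
  ⨆ (Q : Set ℝ) (_ : IsIntv Q) (_ : x ∈ Q), avgE (fun y => |f y|) Q

/-
Take `w = f = 𝟙_[0,1]`. Every interval containing `x` meets `[0,1]` in at most its own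
length, and some interval containing `x` contains `[0,1]`, so `0 < Mw ≤ 1`; hence
`Mf > Mw / 2` on all of `ℝ` and the left side of the estimate at `t = 1/2` is `(Mw)(ℝ) / 2`.
Averaging over `[0, x]` gives `Mw(x) ≥ 1/x` for `x > 1`, so `(Mw)(ℝ) = ∞`, while `‖f‖₁ = 1`.
-/

theorem avgE_le_maxOp {f : ℝ → ℝ} {Q : Set ℝ} {x : ℝ} (hQ : IsIntv Q) (hx : x ∈ Q) :
    avgE (fun y => |f y|) Q ≤ maxOp f x :=
  le_iSup_of_le Q <| le_iSup_of_le hQ <| le_iSup_of_le hx le_rfl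

theorem lintegral_ofReal_inv_Ioi_eq_top {a : ℝ} (ha : 0 ≤ a) :
    ∫⁻ x in Ioi a, ENNReal.ofReal x⁻¹ = ∞ := by
  by_contra hfin
  refine not_integrableOn_Ioi_inv ((lintegral_ofReal_ne_top_iff_integrable
    measurable_inv.aestronglyMeasurable ?_).1 hfin)
  filter_upwards [ae_restrict_mem measurableSet_Ioi] with x hx
  exact inv_nonneg.2 (ha.trans hx.le)

theorem ofReal_abs_indicator_one (s : Set ℝ) (y : ℝ) :
    ENNReal.ofReal |s.indicator 1 y| = s.indicator 1 y := by
  by_cases hy : y ∈ s <;> simp [hy]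

section Indicator

variable {s : Set ℝ}

theorem avgE_abs_indicator_one (hs : MeasurableSet s) (Q : Set ℝ) :
    avgE (fun y => |s.indicator 1 y|) Q = (volume Q)⁻¹ * volume (s ∩ Q) := by
  rw [avgE, ← Measure.restrict_apply hs, ← lintegral_indicator_one hs]
  simp only [ofReal_abs_indicator_one]

theorem maxOp_indicator_one_le_one (hs : MeasurableSet s) (x : ℝ) :
    maxOp (s.indicator 1) x ≤ 1 := by
  refine iSup_le fun Q => iSup_le fun _ => iSup_le fun _ => ?_
  rw [avgE_abs_indicator_one hs]
  exact (mul_le_mul_right (measure_mono inter_subset_right) _).trans (ENNReal.inv_mul_le_one _)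

theorem inv_volume_mul_le_maxOp_indicator_one (hs : MeasurableSet s) {Q : Set ℝ} {x : ℝ}
    (hQ : IsIntv Q) (hsQ : s ⊆ Q) (hx : x ∈ Q) :
    (volume Q)⁻¹ * volume s ≤ maxOp (s.indicator 1) x := by
  simpa only [avgE_abs_indicator_one hs, inter_eq_left.2 hsQ] using
    avgE_le_maxOp (f := s.indicator 1) hQ hx

end Indicator

theorem maxOp_indicator_Icc_pos {a b : ℝ} (hab : a < b) (x : ℝ) :
    0 < maxOp ((Icc a b).indicator 1) x := by
  have hQ : IsIntv (Icc (min x a) (max x b)) :=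
    ⟨_, _, (min_le_right x a).trans_lt (hab.trans_le (le_max_right x b)), rfl⟩
  refine lt_of_lt_of_le ?_ (inv_volume_mul_le_maxOp_indicator_one measurableSet_Icc hQ
    (Icc_subset_Icc (min_le_right x a) (le_max_right x b)) ⟨min_le_left x a, le_max_left x b⟩)
  simp [Real.volume_Icc, hab]

theorem ofReal_inv_le_maxOp_indicator_unitInterval {x : ℝ} (hx : 1 < x) :
    ENNReal.ofReal x⁻¹ ≤ maxOp ((Icc (0 : ℝ) 1).indicator 1) x := by
  have hQ : IsIntv (Icc 0 x) := ⟨0, x, by linarith, rfl⟩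
  convert inv_volume_mul_le_maxOp_indicator_one measurableSet_Icc hQ
    (Icc_subset_Icc le_rfl hx.le) ⟨by linarith, le_rfl⟩ using 1
  rw [Real.volume_Icc, Real.volume_Icc, ENNReal.ofReal_inv_of_pos (by linarith)]
  simp

theorem lintegral_maxOp_indicator_unitInterval_eq_top :
    ∫⁻ x, maxOp ((Icc (0 : ℝ) 1).indicator 1) x = ∞ := by
  refine eq_top_iff.2 ?_
  calc ∞ = ∫⁻ x in Ioi 1, ENNReal.ofReal x⁻¹ :=
        (lintegral_ofReal_inv_Ioi_eq_top zero_le_one).symm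
    _ ≤ ∫⁻ x in Ioi 1, maxOp ((Icc (0 : ℝ) 1).indicator 1) x :=
      setLIntegral_mono' measurableSet_Ioi fun _ hx =>
        ofReal_inv_le_maxOp_indicator_unitInterval hx
    _ ≤ _ := setLIntegral_le_lintegral _ _

/-- The mixed weak type estimate with `v = Mw` fails in general: there is a
weight `w` on `ℝ` (with `Mw` finite a.e.) for which no finite constant `c` satisfies
`sup_{t>0} t (Mw)({x : Mf(x) > t Mw(x)}) ≤ c ∫ |f| dx` uniformly over all `f ∈ L¹(ℝ)`. -/
theorem stmt9 :
    ∃ w : ℝ → ℝ, IsWeight w ∧ (∀ᵐ x : ℝ, maxOp w x ≠ ∞) ∧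
      ¬ ∃ c : ℝ≥0∞, c ≠ ∞ ∧
          ∀ f : ℝ → ℝ, Integrable f volume → ∀ t : ℝ, 0 < t →
            ENNReal.ofReal t *
                ∫⁻ x in {x : ℝ | ENNReal.ofReal t * maxOp w x < maxOp f x}, maxOp w x ≤
              c * ∫⁻ x, ENNReal.ofReal |f x| := by
  set w : ℝ → ℝ := (Icc (0 : ℝ) 1).indicator 1
  have hw_int : Integrable w :=
    (integrableOn_const (by simp) (by simp)).integrable_indicator measurableSet_Icc
  have hw_norm : ∫⁻ x, ENNReal.ofReal |w x| = 1 := by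
    simp only [w, ofReal_abs_indicator_one, lintegral_indicator_one measurableSet_Icc,
      Real.volume_Icc, sub_zero, ENNReal.ofReal_one]
  have hMw_finite (x : ℝ) : maxOp w x ≠ ∞ :=
    ne_top_of_le_ne_top one_ne_top (maxOp_indicator_one_le_one measurableSet_Icc x)
  refine ⟨w, ⟨measurable_one.indicator measurableSet_Icc,
    indicator_nonneg fun _ _ => zero_le_one, hw_int.locallyIntegrable⟩,
    ae_of_all _ hMw_finite, ?_⟩
  rintro ⟨c, hc, hweak⟩
  have hsuper : {x | ENNReal.ofReal (1 / 2) * maxOp w x < maxOp w x} = univ := by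
    refine eq_univ_of_forall fun x => ?_
    simpa [mul_comm, div_eq_mul_inv] using
      ENNReal.half_lt_self (maxOp_indicator_Icc_pos zero_lt_one x).ne' (hMw_finite x)
  have hweak_half := hweak w hw_int (1 / 2) (by norm_num)
  rw [hsuper, Measure.restrict_univ, lintegral_maxOp_indicator_unitInterval_eq_top, hw_norm,
    mul_one, ENNReal.mul_top (by norm_num), top_le_iff] at hweak_half
  exact hc hweak_half
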